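/- In the Chinese restaurant process with parameter θ > 0, the number X_n of occupied tables after n customers satisfies P(X_n = ℓ) = S1(n,ℓ) · θ^ℓ / (θ(θ+1)···(θ+n-1)) for 1 ≤ ℓ ≤ n, where S1(n,ℓ) is the unsigned Stirling number of the first kind. -/

import Mathlib

open Finset

/-- Unsigned Stirling numbers of the first kind. -/
def S1 : ℕ → ℕ → ℕ
  | 0, 0 => 1
  | 0, _ + 1 => 0
  | _ + 1, 0 => 0
  | n + 1, k + 1 => S1 n k + n * S1 n (k + 1)

/-!
Since `1 - θ/(i+θ) = i/(i+θ)`, every summand has the common denominator `∏_{i<n} (θ+i)` and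
numerator `θ^ℓ ∏_{i<n, i ∉ A} i`. It remains to see that `∑_{|A|=ℓ} ∏_{i<n, i ∉ A} i = S1 n ℓ`:
splitting the subsets of `{0,…,n}` according to whether they contain `n` gives exactly the
Stirling recursion `S1 (n+1) (ℓ+1) = S1 n ℓ + n S1 n (ℓ+1)`.
-/

namespace Finset

variable {α : Type*} [DecidableEq α] {s : Finset α} {a : α}

lemma sum_powersetCard_succ_insert {M : Type*} [AddCommMonoid M] (ha : a ∉ s) (k : ℕ)
    (f : Finset α → M) :
    ∑ t ∈ (insert a s).powersetCard (k + 1), f t =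
      ∑ t ∈ s.powersetCard (k + 1), f t + ∑ t ∈ s.powersetCard k, f (insert a t) := by
  have hnot : ∀ {j t}, t ∈ s.powersetCard j → a ∉ t := fun ht hat =>
    ha ((mem_powersetCard.1 ht).1 hat)
  rw [powersetCard_succ_insert ha, sum_union, sum_image]
  · intro t ht u hu htu
    simpa [erase_insert (hnot ht), erase_insert (hnot hu)] using congrArg (erase · a) htu
  · refine disjoint_left.2 fun t ht ht' => ?_
    obtain ⟨u, -, rfl⟩ := mem_image.1 ht'
    exact hnot ht (mem_insert_self a u)

lemma sum_powersetCard_succ_insert_prod_sdiff {R : Type*} [CommSemiring R] (ha : a ∉ s)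
    (k : ℕ) (g : α → R) :
    ∑ t ∈ (insert a s).powersetCard (k + 1), ∏ i ∈ insert a s \ t, g i =
      g a * ∑ t ∈ s.powersetCard (k + 1), ∏ i ∈ s \ t, g i +
        ∑ t ∈ s.powersetCard k, ∏ i ∈ s \ t, g i := by
  rw [sum_powersetCard_succ_insert ha, mul_sum]
  congr 1
  · refine sum_congr rfl fun t ht => ?_
    have hat : a ∉ t := fun h => ha ((mem_powersetCard.1 ht).1 h)
    rw [insert_sdiff_of_notMem _ hat, prod_insert fun h => ha (mem_sdiff.1 h).1]
  · refine sum_congr rfl fun t _ => ?_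
    rw [insert_sdiff_insert, sdiff_insert_of_notMem ha]

end Finset

lemma sum_powersetCard_range_prod_sdiff_eq_S1 {R : Type*} [CommSemiring R] (n ℓ : ℕ) :
    ∑ t ∈ (range n).powersetCard ℓ, ∏ i ∈ range n \ t, (i : R) = S1 n ℓ := by
  induction n generalizing ℓ with
  | zero => cases ℓ <;> simp [S1]
  | succ n ih =>
    cases ℓ with
    | zero => simp [S1, prod_range_succ']
    | succ k =>
      rw [range_add_one, sum_powersetCard_succ_insert_prod_sdiff notMem_range_self, ih, ih, S1]
      push_cast
      ring

lemma prod_mul_prod_sdiff_one_sub_div {K : Type*} [Field K] (θ : K) {s A : Finset ℕ}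
    (hA : A ⊆ s) (hs : ∀ i ∈ s, (i : K) + θ ≠ 0) :
    (∏ i ∈ A, θ / (i + θ)) * ∏ i ∈ s \ A, (1 - θ / (i + θ)) =
      θ ^ #A * (∏ i ∈ s \ A, (i : K)) / ∏ i ∈ s, (θ + i) := by
  have hcompl : ∀ i ∈ s \ A, 1 - θ / (i + θ) = (i : K) / (i + θ) := fun i hi => by
    field_simp [hs i (mem_sdiff.1 hi).1]
    ring
  rw [prod_congr rfl hcompl, prod_div_distrib, prod_div_distrib, prod_const,
    div_mul_div_comm, mul_comm (∏ i ∈ A, _), prod_sdiff hA]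
  simp only [add_comm]

/-- `A` is the set of customers (numbered from `0`) who open a new table; customer `i` does so
with probability `θ/(i+θ)`, independently of the others. -/
theorem chinese_restaurant_distribution_general (θ : ℝ) (hθ : 0 < θ) (n ℓ : ℕ) :
    ∑ A ∈ (Finset.range n).powersetCard ℓ,
        (∏ i ∈ A, θ / (i + θ)) * ∏ i ∈ (Finset.range n) \ A, (1 - θ / (i + θ))
      = (S1 n ℓ : ℝ) * θ ^ ℓ / ∏ i ∈ Finset.range n, (θ + i) := by
  have hden : ∀ i ∈ range n, (i : ℝ) + θ ≠ 0 := fun i _ => by positivity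
  calc _ = ∑ A ∈ (range n).powersetCard ℓ,
          θ ^ ℓ * (∏ i ∈ range n \ A, (i : ℝ)) / ∏ i ∈ range n, (θ + i) := by
        refine sum_congr rfl fun A hA => ?_
        obtain ⟨hAn, rfl⟩ := mem_powersetCard.1 hA
        exact prod_mul_prod_sdiff_one_sub_div θ hAn hden
    _ = _ := by
        rw [← sum_div, ← mul_sum, sum_powersetCard_range_prod_sdiff_eq_S1, mul_comm]

/-- In the Chinese restaurant process with parameter `θ > 0`, the number of occupied
tables after `n` customers is `X_n = Y₁ + ⋯ + Y_n` with independent Bernoulli `Y_i`,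
`P(Y_i = 1) = θ/(i-1+θ)`.  Then `P(X_n = ℓ) = S1(n,ℓ) θ^ℓ / θ^{↑n}`.
(The probability `P(X_n = ℓ)` is written as the sum over the possible sets of success
times of the product of the corresponding probabilities.) -/
theorem chinese_restaurant_distribution (θ : ℝ) (hθ : 0 < θ) (n ℓ : ℕ)
    (hℓ : 1 ≤ ℓ) (hℓn : ℓ ≤ n) :
    ∑ A ∈ (Finset.range n).powersetCard ℓ,
        (∏ i ∈ A, θ / (i + θ)) * ∏ i ∈ (Finset.range n) \ A, (1 - θ / (i + θ))
      = (S1 n ℓ : ℝ) * θ ^ ℓ / ∏ i ∈ Finset.range n, (θ + i) :=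
  chinese_restaurant_distribution_general θ hθ n ℓ
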